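/- arXiv:2011.07131 — 5 statements merged into one kernel-verified Lean document; each statement's English description precedes it below -/
import Mathlib

section
/- Fix integers r ≥ 1 and m* ≥ r. For each n, let p_n > m* be an integer and let Ŵ⁽ⁿ⁾ be a random p_n × p_n real symmetric positive semidefinite matrix whose entrywise expectation W⁽ⁿ⁾ = E[Ŵ⁽ⁿ⁾] is symmetric positive semidefinite of rank r. Write λ̂₁⁽ⁿ⁾ ≥ … ≥ λ̂_{p_n}⁽ⁿ⁾ for the eigenvalues of Ŵ⁽ⁿ⁾ and λ₁⁽ⁿ⁾ ≥ … ≥ λ_r⁽ⁿ⁾ > 0 = λ_{r+1}⁽ⁿ⁾ = … = λ_{p_n}⁽ⁿ⁾ for those of W⁽ⁿ⁾, and assume λ_r⁽ⁿ⁾ → ∞ as n → ∞. Let γ_n > 0 and β_n > 0 be deterministic sequences such that: (a) for every ε > 0 there exists M > 0 with limsup_n P(|λ̂₁⁽ⁿ⁾ − λ₁⁽ⁿ⁾| > ε·λ₁⁽ⁿ⁾ + M·γ_n) ≤ ε and limsup_n P(|λ̂_r⁽ⁿ⁾ − λ_r⁽ⁿ⁾| > ε·λ_r⁽ⁿ⁾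 + M·γ_n) ≤ ε; (b) for every ε > 0 there exists M > 0 with limsup_n P(λ̂_{r+1}⁽ⁿ⁾ > M·β_n) ≤ ε. Let g_n > 0 be a deterministic penalty sequence satisfying (g_n + γ_n)/λ_r⁽ⁿ⁾ → 0 and g_n/β_n → ∞. Then P( m = r is the unique minimizer over m ∈ {0,1,…,m*} of Σ_{j=m+1}^{p_n} λ̂_j⁽ⁿ⁾ + m·g_n ) → 1 as n → ∞. -/
/-!
The IC criterion changes by `g - λ̂_{m+1}` when `m` is increased by one, so it strictly
decreases while `λ̂_{m+1} > g` and strictly increases once `λ̂_{m+1} < g`; by monotonicity of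
the sample eigenvalues, `r` is therefore the unique minimiser whenever `λ̂_{r+1} < g_n < λ̂_r`.
Both inequalities hold with probability tending to one: `λ̂_r` is within `o_P(λ_r) + O_P(γ_n)`
of `λ_r`, which dominates `g_n + γ_n`, while `λ̂_{r+1} = O_P(β_n)` and `g_n / β_n → ∞`.
-/

open MeasureTheory Filter Topology

/-- `Σ_{j=m+1}^{q} λ̂_j + m g` in the paper's 1-based indexing of the eigenvalues. -/
def icCriterion {q : ℕ} (lh : Fin q → ℝ) (g : ℝ) (m : ℕ) : ℝ :=
  (∑ j ∈ Finset.univ.filter (fun j : Fin q => m ≤ (j : ℕ)), lh j) + (m : ℝ) * g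

section ICCriterion

variable {q : ℕ} (lh : Fin q → ℝ) (g : ℝ)

theorem icCriterion_succ {m : ℕ} (hm : m < q) :
    icCriterion lh g (m + 1) = icCriterion lh g m - lh ⟨m, hm⟩ + g := by
  have hfilter : Finset.univ.filter (fun j : Fin q => m ≤ (j : ℕ)) =
      insert ⟨m, hm⟩ (Finset.univ.filter (fun j : Fin q => m + 1 ≤ (j : ℕ))) := by
    ext j
    simp only [Finset.mem_filter, Finset.mem_insert, Finset.mem_univ, true_and, Fin.ext_iff]
    omega
  rw [icCriterion, icCriterion, hfilter, Finset.sum_insert (by simp)]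
  push_cast
  ring

variable {lh g}

theorem icCriterion_lt_of_ne {r m : ℕ} (hrq : r ≤ q)
    (hgt : ∀ j : Fin q, (j : ℕ) < r → g < lh j) (hlt : ∀ j : Fin q, r ≤ (j : ℕ) → lh j < g)
    (hmq : m ≤ q) (hmr : m ≠ r) : icCriterion lh g r < icCriterion lh g m := by
  have hanti : StrictAntiOn (icCriterion lh g) (Set.Iic r) :=
    strictAntiOn_of_add_one_lt Set.ordConnected_Iic fun a _ _ ha => by
      have ha : a < r := ha
      rw [icCriterion_succ lh g (by omega)]
      linarith [hgt ⟨a, by omega⟩ ha]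
  have hmono : StrictMonoOn (icCriterion lh g) (Set.Icc r q) :=
    strictMonoOn_of_lt_add_one Set.ordConnected_Icc fun a _ ha ha' => by
      have ha : r ≤ a := ha.1
      have ha' : a + 1 ≤ q := ha'.2
      rw [icCriterion_succ lh g (by omega)]
      linarith [hlt ⟨a, by omega⟩ ha]
  rcases Nat.lt_or_gt_of_ne hmr with h | h
  · exact hanti (Set.mem_Iic.2 h.le) Set.self_mem_Iic h
  · exact hmono ⟨le_rfl, hrq⟩ ⟨h.le, hmq⟩ h

theorem Antitone.icCriterion_lt_of_ne {r m : ℕ} (hlh : Antitone lh) (hr : 1 ≤ r)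
    (hrq : r < q) (hgt : g < lh ⟨r - 1, by omega⟩) (hlt : lh ⟨r, hrq⟩ < g)
    (hmq : m ≤ q) (hmr : m ≠ r) : icCriterion lh g r < icCriterion lh g m :=
  _root_.icCriterion_lt_of_ne hrq.le
    (fun j hj => hgt.trans_le (hlh (Fin.le_iff_val_le_val.2 (by dsimp only; omega))))
    (fun j hj => (hlh (Fin.le_iff_val_le_val.2 hj)).trans_lt hlt) hmq hmr

end ICCriterion

theorem ENNReal.tendsto_zero_of_forall_limsup_le_ofReal {ι : Type*} {l : Filter ι}
    {u : ι → ENNReal} (h : ∀ ε : ℝ, 0 < ε → limsup u l ≤ ENNReal.ofReal ε) :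
    Tendsto u l (𝓝 0) := by
  refine tendsto_of_le_liminf_of_limsup_le zero_le ?_
  refine ENNReal.le_of_forall_pos_le_add fun ε hε _ => ?_
  simpa using h ε hε

section Probability

variable {Ω ι : Type*} [MeasurableSpace Ω] (P : Measure Ω) {l : Filter ι}

theorem tendsto_measure_one_of_compl_subset_union [IsProbabilityMeasure P]
    {s t T : ι → Set Ω} (hs : Tendsto (fun i => P (s i)) l (𝓝 0))
    (ht : Tendsto (fun i => P (t i)) l (𝓝 0)) (hT : ∀ i, (T i)ᶜ ⊆ s i ∪ t i) :
    Tendsto (fun i => P (T i)) l (𝓝 1) := by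
  have hcompl : ∀ i, 1 - (P (s i) + P (t i)) ≤ P (T i) := fun i => by
    rw [tsub_le_iff_right]
    calc (1 : ENNReal) = P Set.univ := measure_univ.symm
      _ ≤ P (T i) + P (T i)ᶜ := measure_univ_le_add_compl _
      _ ≤ P (T i) + (P (s i) + P (t i)) :=
        add_le_add_right ((measure_mono (hT i)).trans (measure_union_le _ _)) _
  have hlower : Tendsto (fun i => 1 - (P (s i) + P (t i))) l (𝓝 1) := by
    simpa using ENNReal.Tendsto.sub tendsto_const_nhds (hs.add ht) (Or.inl ENNReal.one_ne_top)
  exact tendsto_of_tendsto_of_tendsto_of_le_of_le hlower tendsto_const_nhds hcompl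
    fun _ => prob_le_one

theorem tendsto_measure_setOf_le_of_relative_error (X : ι → Ω → ℝ) {L γ g : ι → ℝ}
    (hL : ∀ i, 0 < L i) (hγ : ∀ i, 0 ≤ γ i) (hg : ∀ i, 0 ≤ g i)
    (hgγ : Tendsto (fun i => (g i + γ i) / L i) l (𝓝 0))
    (herr : ∀ ε : ℝ, 0 < ε → ∃ M : ℝ, 0 < M ∧
      limsup (fun i => P {ω | ε * L i + M * γ i < |X i ω - L i|}) l ≤ ENNReal.ofReal ε) :
    Tendsto (fun i => P {ω | X i ω ≤ g i}) l (𝓝 0) := by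
  refine ENNReal.tendsto_zero_of_forall_limsup_le_ofReal fun ε hε => ?_
  obtain ⟨M, hM, hlim⟩ := herr (min ε (1 / 2)) (by positivity)
  refine (limsup_le_limsup ?_).trans
    (hlim.trans (ENNReal.ofReal_le_ofReal (min_le_left _ _)))
  filter_upwards [hgγ.eventually_lt_const (show (0 : ℝ) < 1 / (2 * (1 + M)) by positivity)]
    with i hi
  refine measure_mono fun ω (hω : X i ω ≤ g i) => ?_
  -- On `X i ≤ g i` the error is at least `L i - g i`, which beats `ε L i + M γ i` as soon as
  -- `ε ≤ 1/2` and `(1 + M) (g i + γ i) < L i / 2`.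
  have hsmall : (1 + M) * (g i + γ i) < L i / 2 := by
    rw [div_lt_iff₀ (hL i)] at hi
    field_simp at hi ⊢
    linarith
  have hεL : min ε (1 / 2) * L i ≤ 1 / 2 * L i :=
    mul_le_mul_of_nonneg_right (min_le_right _ _) (hL i).le
  have hMg : 0 ≤ M * g i := mul_nonneg hM.le (hg i)
  show min ε (1 / 2) * L i + M * γ i < |X i ω - L i|
  rw [abs_sub_comm]
  linarith [le_abs_self (L i - X i ω), hγ i]

theorem tendsto_measure_setOf_ge_of_bigOInProb (X : ι → Ω → ℝ) {β g : ι → ℝ}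
    (hβ : ∀ i, 0 < β i) (hgβ : Tendsto (fun i => g i / β i) l atTop)
    (hX : ∀ ε : ℝ, 0 < ε → ∃ M : ℝ,
      limsup (fun i => P {ω | M * β i < X i ω}) l ≤ ENNReal.ofReal ε) :
    Tendsto (fun i => P {ω | g i ≤ X i ω}) l (𝓝 0) := by
  refine ENNReal.tendsto_zero_of_forall_limsup_le_ofReal fun ε hε => ?_
  obtain ⟨M, hlim⟩ := hX ε hε
  refine (limsup_le_limsup ?_).trans hlim
  filter_upwards [hgβ.eventually_gt_atTop M] with i hi
  refine measure_mono fun ω (hω : g i ≤ X i ω) => ?_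
  exact ((lt_div_iff₀ (hβ i)).1 hi).trans_le hω

end Probability

theorem stmt0
    (r mstar : ℕ) (hr : 1 ≤ r) (hrm : r ≤ mstar)
    (p : ℕ → ℕ) (hp : ∀ n, mstar < p n)
    {Ω : Type*} [MeasurableSpace Ω] (P : Measure Ω) [IsProbabilityMeasure P]
    -- λ̂ n ω : the eigenvalues of Ŵ⁽ⁿ⁾(ω), listed in decreasing order
    (lamhat : (n : ℕ) → Ω → Fin (p n) → ℝ)
    (hlamhat_anti : ∀ n ω, Antitone (lamhat n ω))
    -- λ n : the eigenvalues of W⁽ⁿ⁾, listed in decreasing order; the top r are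
    -- positive and the remaining p_n − r are zero
    (lam : (n : ℕ) → Fin (p n) → ℝ)
    (hlam_pos : ∀ n (j : Fin (p n)), (j : ℕ) < r → 0 < lam n j)
    (γ β : ℕ → ℝ) (hγ : ∀ n, 0 < γ n) (hβ : ∀ n, 0 < β n)
    -- condition (a): |λ̂₁ − λ₁| = o_P(λ₁) + O_P(γ_n) and |λ̂_r − λ_r| = o_P(λ_r) + O_P(γ_n)
    (ha2 : ∀ ε : ℝ, 0 < ε → ∃ M : ℝ, 0 < M ∧
        limsup (fun n => P {ω |
            ε * lam n ⟨r - 1, by have := hp n; omega⟩ + M * γ n <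
              |lamhat n ω ⟨r - 1, by have := hp n; omega⟩ -
                lam n ⟨r - 1, by have := hp n; omega⟩|}) atTop ≤ ENNReal.ofReal ε)
    -- condition (b): λ̂_{r+1} = O_P(β_n)
    (hb : ∀ ε : ℝ, 0 < ε → ∃ M : ℝ, 0 < M ∧
        limsup (fun n => P {ω |
            M * β n < lamhat n ω ⟨r, by have := hp n; omega⟩}) atTop ≤ ENNReal.ofReal ε)
    -- the penalty sequence
    (g : ℕ → ℝ) (hgpos : ∀ n, 0 < g n)
    (hg1 : Tendsto (fun n => (g n + γ n) / lam n ⟨r - 1, by have := hp n; omega⟩)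
      atTop (nhds 0))
    (hg2 : Tendsto (fun n => g n / β n) atTop atTop) :
    Tendsto (fun n => P {ω | ∀ m, m ≤ mstar → m ≠ r →
        (∑ j ∈ Finset.univ.filter (fun j : Fin (p n) => r ≤ (j : ℕ)), lamhat n ω j)
            + (r : ℝ) * g n <
          (∑ j ∈ Finset.univ.filter (fun j : Fin (p n) => m ≤ (j : ℕ)), lamhat n ω j)
            + (m : ℝ) * g n}) atTop (nhds 1) := by
  have hrp : ∀ n, r < p n := fun n => hrm.trans_lt (hp n)
  refine tendsto_measure_one_of_compl_subset_union P
    (tendsto_measure_setOf_le_of_relative_error P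
      (fun n ω => lamhat n ω ⟨r - 1, by have := hrp n; omega⟩)
      (fun n => hlam_pos n _ (by dsimp only; omega)) (fun n => (hγ n).le)
      (fun n => (hgpos n).le) hg1 ha2)
    (tendsto_measure_setOf_ge_of_bigOInProb P (fun n ω => lamhat n ω ⟨r, hrp n⟩) hβ hg2
      fun ε hε => (hb ε hε).imp fun _ => And.right)
    fun n ω hω => ?_
  by_contra hω'
  simp only [Set.mem_union, Set.mem_ofPred_eq, not_or, not_le] at hω'
  exact hω fun m hm hmr => (hlamhat_anti n ω).icCriterion_lt_of_ne hr (hrp n) hω'.1 hω'.2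
    ((hp n).le.trans' hm) hmr
end

section
/- Let d ≥ r ≥ 1 be integers, let U, Û ∈ ℝ^{d×r} each have orthonormal columns (columns of Û denoted û₁,…,û_r), let S ∈ ℝ^{r×r} be symmetric positive semidefinite with smallest eigenvalue λ_min(S), and let 0 ≤ m < r. Then Σ_{j=m+1}^{r} û_jᵀ U S Uᵀ û_j ≥ (r − m)·λ_min(S)·(1 − ‖ÛÛᵀ − UUᵀ‖₂²). -/
/-!
For a column `û_j = Û e_j`, write `x = Uᵀ û_j`. Since `ÛÛᵀ û_j = û_j`, the vector
`(ÛÛᵀ - UUᵀ) û_j = û_j - U x` is the component of the unit vector `û_j` orthogonal to the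
range of `U`, so by Pythagoras `‖x‖² = 1 - ‖(ÛÛᵀ - UUᵀ) û_j‖² ≥ 1 - ‖ÛÛᵀ - UUᵀ‖₂²`.
The `j`-th diagonal entry of `ÛᵀUSUᵀÛ` is `xᵀ S x ≥ λ_min(S) ‖x‖²`, and `λ_min(S) ≥ 0`;
summing over the `r - m` indices `j ≥ m` gives the bound.
-/

open Matrix

/-- The spectral norm (largest singular value) of a real matrix, i.e. the operator
norm of the associated linear map between Euclidean spaces. -/
noncomputable def specNorm {m n : Type*} [Fintype m] [Fintype n] [DecidableEq n]
    (A : Matrix m n ℝ) : ℝ :=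
  ‖LinearMap.toContinuousLinearMap (Matrix.toEuclideanLin A)‖

/-- The smallest eigenvalue of a real symmetric (Hermitian) matrix. -/
noncomputable def lambdaMin {n : Type*} [Fintype n] [DecidableEq n]
    {A : Matrix n n ℝ} (hA : A.IsHermitian) : ℝ :=
  sInf (Set.range hA.eigenvalues)

open scoped MatrixOrder Matrix.Norms.L2Operator

namespace Matrix

variable {k d : Type*} [Fintype k] [Fintype d]

lemma _root_.EuclideanSpace.norm_toLp_sq (x : k → ℝ) : ‖WithLp.toLp 2 x‖ ^ 2 = x ⬝ᵥ x := by
  rw [EuclideanSpace.real_norm_sq_eq]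
  simp only [dotProduct, sq]

lemma transpose_mul_mul_apply_self {l α : Type*} [CommSemiring α] (B : Matrix k l α)
    (S : Matrix k k α) (j : l) : (Bᵀ * S * B) j j = B.col j ⬝ᵥ S *ᵥ B.col j := by
  simp only [mul_apply, dotProduct, mulVec, transpose_apply, col_apply, Finset.sum_mul,
    Finset.mul_sum]
  rw [Finset.sum_comm]
  exact Finset.sum_congr rfl fun _ _ => Finset.sum_congr rfl fun _ _ => by ring

variable [DecidableEq k]

lemma IsHermitian.lambdaMin_le_eigenvalues {A : Matrix k k ℝ} (hA : A.IsHermitian) (i : k) :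
    lambdaMin hA ≤ hA.eigenvalues i :=
  csInf_le (Set.finite_range _).bddBelow ⟨i, rfl⟩

lemma PosSemidef.lambdaMin_nonneg [Nonempty k] {A : Matrix k k ℝ} (hA : A.PosSemidef) :
    0 ≤ lambdaMin hA.isHermitian :=
  le_csInf (Set.range_nonempty _) (Set.forall_mem_range.mpr hA.eigenvalues_nonneg)

lemma IsHermitian.posSemidef_sub_lambdaMin_smul_one {A : Matrix k k ℝ} (hA : A.IsHermitian) :
    (A - lambdaMin hA • 1).PosSemidef := by
  rw [← le_iff, ← Algebra.algebraMap_eq_smul_one,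
    algebraMap_le_iff_le_spectrum hA.isSelfAdjoint, hA.spectrum_real_eq_range_eigenvalues]
  exact Set.forall_mem_range.mpr hA.lambdaMin_le_eigenvalues

lemma IsHermitian.lambdaMin_mul_dotProduct_self_le {A : Matrix k k ℝ} (hA : A.IsHermitian)
    (x : k → ℝ) : lambdaMin hA * (x ⬝ᵥ x) ≤ x ⬝ᵥ A *ᵥ x := by
  have h := hA.posSemidef_sub_lambdaMin_smul_one.dotProduct_mulVec_nonneg x
  simp only [star_trivial, sub_mulVec, dotProduct_sub, smul_mulVec, one_mulVec,
    dotProduct_smul, smul_eq_mul] at h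
  linarith

lemma mulVec_dotProduct_self_le_specNorm_sq (A : Matrix d k ℝ) (x : k → ℝ) :
    (A *ᵥ x) ⬝ᵥ (A *ᵥ x) ≤ specNorm A ^ 2 * (x ⬝ᵥ x) := by
  rw [← EuclideanSpace.norm_toLp_sq, ← EuclideanSpace.norm_toLp_sq, ← mul_pow]
  gcongr
  exact l2_opNorm_mulVec A _

section OrthonormalColumns

variable {U : Matrix d k ℝ}

lemma mulVec_dotProduct_self_of_transpose_mul_self (hU : Uᵀ * U = 1) (x : k → ℝ) :
    (U *ᵥ x) ⬝ᵥ (U *ᵥ x) = x ⬝ᵥ x := by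
  rw [← dotProduct_transpose_mulVec, mulVec_mulVec, hU, one_mulVec]

lemma dotProduct_self_sub_projection (hU : Uᵀ * U = 1) (v : d → ℝ) :
    (v - (U * Uᵀ) *ᵥ v) ⬝ᵥ (v - (U * Uᵀ) *ᵥ v) = v ⬝ᵥ v - (Uᵀ *ᵥ v) ⬝ᵥ (Uᵀ *ᵥ v) := by
  rw [← mulVec_mulVec]
  have hcross : v ⬝ᵥ U *ᵥ (Uᵀ *ᵥ v) = (Uᵀ *ᵥ v) ⬝ᵥ (Uᵀ *ᵥ v) := by
    rw [← dotProduct_transpose_mulVec]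
  simp only [sub_dotProduct, dotProduct_sub, hcross, dotProduct_comm (U *ᵥ _) v,
    mulVec_dotProduct_self_of_transpose_mul_self hU]
  ring

lemma dotProduct_self_mul_one_sub_specNorm_sq_le [DecidableEq d] {Uhat : Matrix d k ℝ}
    (hU : Uᵀ * U = 1) (hUhat : Uhatᵀ * Uhat = 1) (y : k → ℝ) :
    (y ⬝ᵥ y) * (1 - specNorm (Uhat * Uhatᵀ - U * Uᵀ) ^ 2) ≤
      ((Uᵀ * Uhat) *ᵥ y) ⬝ᵥ ((Uᵀ * Uhat) *ᵥ y) := by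
  have hE : (Uhat * Uhatᵀ - U * Uᵀ) *ᵥ (Uhat *ᵥ y) =
      Uhat *ᵥ y - (U * Uᵀ) *ᵥ (Uhat *ᵥ y) := by
    rw [sub_mulVec, mulVec_mulVec, Matrix.mul_assoc, hUhat, Matrix.mul_one]
  have hbound := mulVec_dotProduct_self_le_specNorm_sq (Uhat * Uhatᵀ - U * Uᵀ) (Uhat *ᵥ y)
  rw [hE, dotProduct_self_sub_projection hU, mulVec_mulVec,
    mulVec_dotProduct_self_of_transpose_mul_self hUhat] at hbound
  linarith

lemma lambdaMin_mul_one_sub_specNorm_sq_le_apply [DecidableEq d] {Uhat : Matrix d k ℝ}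
    (hU : Uᵀ * U = 1) (hUhat : Uhatᵀ * Uhat = 1) {S : Matrix k k ℝ} (hS : S.PosSemidef) (j : k) :
    lambdaMin hS.isHermitian * (1 - specNorm (Uhat * Uhatᵀ - U * Uᵀ) ^ 2) ≤
      (Uhatᵀ * U * S * Uᵀ * Uhat) j j := by
  have : Nonempty k := ⟨j⟩
  set B := Uᵀ * Uhat
  have hB : Uhatᵀ * U * S * Uᵀ * Uhat = Bᵀ * S * B := by
    simp only [B, transpose_mul, transpose_transpose, Matrix.mul_assoc]
  rw [hB, transpose_mul_mul_apply_self, ← mulVec_single_one]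
  calc lambdaMin hS.isHermitian * (1 - specNorm (Uhat * Uhatᵀ - U * Uᵀ) ^ 2)
      = lambdaMin hS.isHermitian * ((Pi.single j 1 ⬝ᵥ Pi.single j 1) *
          (1 - specNorm (Uhat * Uhatᵀ - U * Uᵀ) ^ 2)) := by simp
    _ ≤ lambdaMin hS.isHermitian * ((B *ᵥ Pi.single j 1) ⬝ᵥ (B *ᵥ Pi.single j 1)) :=
        mul_le_mul_of_nonneg_left (dotProduct_self_mul_one_sub_specNorm_sq_le hU hUhat _)
          hS.lambdaMin_nonneg
    _ ≤ _ := hS.isHermitian.lambdaMin_mul_dotProduct_self_le _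

end OrthonormalColumns

end Matrix

theorem stmt4_general (d r : ℕ) (m : ℕ) (hm : m < r)
    (U Uhat : Matrix (Fin d) (Fin r) ℝ)
    (hU : Uᵀ * U = 1) (hUhat : Uhatᵀ * Uhat = 1)
    (S : Matrix (Fin r) (Fin r) ℝ) (hS : S.PosSemidef) :
    ((r : ℝ) - (m : ℝ)) * lambdaMin hS.isHermitian *
        (1 - specNorm (Uhat * Uhatᵀ - U * Uᵀ) ^ 2) ≤
      ∑ j ∈ Finset.univ.filter (fun j : Fin r => m ≤ (j : ℕ)),
        (Uhatᵀ * U * S * Uᵀ * Uhat) j j := by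
  have hcard : (Finset.univ.filter (fun j : Fin r => m ≤ (j : ℕ))).card = r - m := by
    rw [← Fin.card_Ici ⟨m, hm⟩]
    congr 1
    ext j
    simp [Fin.le_def]
  have hsum := Finset.card_nsmul_le_sum (Finset.univ.filter (fun j : Fin r => m ≤ (j : ℕ)))
    (fun j => (Uhatᵀ * U * S * Uᵀ * Uhat) j j) _ fun j _ =>
    lambdaMin_mul_one_sub_specNorm_sq_le_apply hU hUhat hS j
  rw [hcard, nsmul_eq_mul, Nat.cast_sub hm.le, ← mul_assoc] at hsum
  exact hsum

/-- for orthonormal-column matrices U, Û ∈ ℝ^{d×r}, a symmetric positive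
semidefinite S ∈ ℝ^{r×r} and 0 ≤ m < r,
Σ_{j=m+1}^{r} û_jᵀ U S Uᵀ û_j ≥ (r − m)·λ_min(S)·(1 − ‖ÛÛᵀ − UUᵀ‖₂²). -/
theorem stmt4 (d r : ℕ) (hr : 1 ≤ r) (hd : r ≤ d) (m : ℕ) (hm : m < r)
    (U Uhat : Matrix (Fin d) (Fin r) ℝ)
    (hU : Uᵀ * U = 1) (hUhat : Uhatᵀ * Uhat = 1)
    (S : Matrix (Fin r) (Fin r) ℝ) (hS : S.PosSemidef) :
    ((r : ℝ) - (m : ℝ)) * lambdaMin hS.isHermitian *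
        (1 - specNorm (Uhat * Uhatᵀ - U * Uᵀ) ^ 2) ≤
      ∑ j ∈ Finset.univ.filter (fun j : Fin r => m ≤ (j : ℕ)),
        (Uhatᵀ * U * S * Uᵀ * Uhat) j j :=
  stmt4_general d r m hm U Uhat hU hUhat S hS
end

section
/- Let d > r ≥ 1 be integers, let U ∈ ℝ^{d×r} have orthonormal columns, let U_⊥ ∈ ℝ^{d×(d−r)} be such that [U U_⊥] is orthogonal, and let Q ∈ ℝ^{(d−r)×r} be arbitrary. Let S denote the unique symmetric positive definite square root of I_r + QᵀQ. Then the matrix Ũ = (U + U_⊥Q)·S⁻¹ has orthonormal columns (ŨᵀŨ = I_r) and satisfies ‖Ũ − U‖₂ ≤ 2‖Q‖₂. -/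
open Matrix

/-!
Put `V = U + U_⊥ Q`. Orthonormality of `[U U_⊥]` gives `VᵀV = I + QᵀQ = S²` and `UᵀV = I`, so
`Ũ = V S⁻¹` has orthonormal columns and `D = Ũ - U` satisfies `DᵀD = 2 (I - S⁻¹)`.
Factoring `S² - I = QᵀQ` gives `I - S⁻¹ = S⁻¹ QᵀQ (S + I)⁻¹`, and since `S` and `S + I` do not
shrink Euclidean norms, `‖D‖² = ‖DᵀD‖ ≤ 2 ‖Q‖²`; this is even `‖D‖ ≤ √2 ‖Q‖`.
-/

open scoped Matrix.Norms.L2Operator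

theorem specNorm_eq_l2_opNorm {m n : Type*} [Fintype m] [Fintype n] [DecidableEq n]
    (A : Matrix m n ℝ) : specNorm A = ‖A‖ :=
  rfl

namespace Matrix

section Algebra

variable {R : Type*} [CommRing R] {m n k : Type*} [Fintype m] [DecidableEq n]

theorem transpose_fromCols_mul_fromCols_eq_one_iff [DecidableEq k]
    (A : Matrix m n R) (B : Matrix m k R) :
    (fromCols A B)ᵀ * fromCols A B = 1 ↔ Aᵀ * A = 1 ∧ Aᵀ * B = 0 ∧ Bᵀ * B = 1 := by
  rw [transpose_fromCols, fromRows_mul_fromCols, ← fromBlocks_one, fromBlocks_inj]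
  constructor
  · rintro ⟨hAA, hAB, -, hBB⟩
    exact ⟨hAA, hAB, hBB⟩
  · rintro ⟨hAA, hAB, hBB⟩
    refine ⟨hAA, hAB, ?_, hBB⟩
    simpa [transpose_mul] using congrArg transpose hAB

theorem transpose_mul_add_mul [Fintype k] {A : Matrix m n R} {B : Matrix m k R}
    (hAA : Aᵀ * A = 1) (hAB : Aᵀ * B = 0) (Q : Matrix k n R) :
    Aᵀ * (A + B * Q) = 1 := by
  rw [Matrix.mul_add, hAA, ← Matrix.mul_assoc, hAB, Matrix.zero_mul, add_zero]

theorem transpose_mul_self_add_mul [Fintype k] [DecidableEq k]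
    {A : Matrix m n R} {B : Matrix m k R}
    (hAA : Aᵀ * A = 1) (hAB : Aᵀ * B = 0) (hBB : Bᵀ * B = 1) (Q : Matrix k n R) :
    (A + B * Q)ᵀ * (A + B * Q) = 1 + Qᵀ * Q := by
  have hBA : Bᵀ * A = 0 := by simpa [transpose_mul] using congrArg transpose hAB
  rw [transpose_add, Matrix.add_mul, transpose_mul_add_mul hAA hAB, transpose_mul,
    Matrix.mul_assoc, Matrix.mul_add, hBA, ← Matrix.mul_assoc Bᵀ, hBB, Matrix.one_mul, zero_add]

theorem transpose_mul_self_mul_inv [Fintype n] {V : Matrix m n R} {S : Matrix n n R}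
    (hV : Vᵀ * V = S * S) (hS : Sᵀ = S) (hdet : IsUnit S.det) :
    (V * S⁻¹)ᵀ * (V * S⁻¹) = 1 := by
  rw [transpose_mul, transpose_nonsing_inv, hS, Matrix.mul_assoc, ← Matrix.mul_assoc Vᵀ, hV,
    ← Matrix.mul_assoc, ← Matrix.mul_assoc, nonsing_inv_mul _ hdet, Matrix.one_mul,
    mul_nonsing_inv _ hdet]

theorem transpose_sub_mul_sub {W U : Matrix m n R} {T : Matrix n n R}
    (hW : Wᵀ * W = 1) (hU : Uᵀ * U = 1) (hUW : Uᵀ * W = T) (hT : Tᵀ = T) :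
    (W - U)ᵀ * (W - U) = (2 : R) • (1 - T) := by
  have hWU : Wᵀ * U = T := by rw [← hT, ← hUW, transpose_mul, transpose_transpose]
  rw [transpose_sub, Matrix.sub_mul, Matrix.mul_sub, Matrix.mul_sub, hW, hU, hUW, hWU, two_smul]
  abel

theorem one_sub_inv_eq_inv_mul_mul_inv [Fintype n] {S P : Matrix n n R} (hSS : S * S = 1 + P)
    (hS : IsUnit S.det) (hS₁ : IsUnit (S + 1).det) :
    1 - S⁻¹ = S⁻¹ * P * (S + 1)⁻¹ := by
  have hP : P = (S - 1) * (S + 1) := by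
    rw [eq_sub_of_add_eq' hSS.symm]
    noncomm_ring
  rw [hP, ← Matrix.mul_assoc, mul_nonsing_inv_cancel_right _ _ hS₁, Matrix.mul_sub,
    nonsing_inv_mul _ hS, Matrix.mul_one]

end Algebra

variable {n : Type*} [Fintype n] [DecidableEq n]

theorem norm_le_norm_toEuclideanCLM {B : Matrix n n ℝ} (hB : (Bᵀ * B - 1).PosSemidef)
    (x : EuclideanSpace ℝ n) : ‖x‖ ≤ ‖toEuclideanCLM (𝕜 := ℝ) B x‖ := by
  have key : ‖toEuclideanCLM (𝕜 := ℝ) B x‖ ^ 2 =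
      ‖x‖ ^ 2 + x.ofLp ⬝ᵥ (Bᵀ * B - 1) *ᵥ x.ofLp := by
    rw [← real_inner_self_eq_norm_sq, ← real_inner_self_eq_norm_sq, inner_toEuclideanCLM,
      ofLp_toEuclideanCLM, EuclideanSpace.inner_eq_star_dotProduct, sub_mulVec, dotProduct_sub,
      ← mulVec_mulVec, dotProduct_mulVec x.ofLp, vecMul_transpose, one_mulVec]
    simp only [star_trivial, add_sub_cancel]
  have hnonneg := hB.dotProduct_mulVec_nonneg x.ofLp
  rw [star_trivial] at hnonneg
  exact (sq_le_sq₀ (norm_nonneg _) (norm_nonneg _)).1 (by linarith)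

theorem l2_opNorm_inv_le_one {B : Matrix n n ℝ} (hB : IsUnit B.det)
    (hBB : (Bᵀ * B - 1).PosSemidef) : ‖B⁻¹‖ ≤ 1 := by
  rw [cstar_norm_def]
  refine ContinuousLinearMap.opNorm_le_bound _ zero_le_one fun y => ?_
  calc ‖toEuclideanCLM (𝕜 := ℝ) B⁻¹ y‖
      ≤ ‖toEuclideanCLM (𝕜 := ℝ) B (toEuclideanCLM (𝕜 := ℝ) B⁻¹ y)‖ :=
        norm_le_norm_toEuclideanCLM hBB _
    _ = 1 * ‖y‖ := by
      rw [← mul_apply_eq_comp, ← map_mul, mul_nonsing_inv _ hB, map_one, one_mul,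
        one_apply_eq_self]

theorem l2_opNorm_transpose_mul_self {m : Type*} [Fintype m] (A : Matrix m n ℝ) :
    ‖Aᵀ * A‖ = ‖A‖ * ‖A‖ := by
  rw [← conjTranspose_eq_transpose_of_trivial, l2_opNorm_conjTranspose_mul_self]

theorem l2_opNorm_one_sub_inv_le {k : Type*} [Fintype k] {S : Matrix n n ℝ} (hS : S.PosDef)
    {Q : Matrix k n ℝ} (hSS : S * S = 1 + Qᵀ * Q) : ‖1 - S⁻¹‖ ≤ ‖Q‖ * ‖Q‖ := by
  have hSt : Sᵀ = S := (isHermitian_iff_isSymm.1 hS.isHermitian).eq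
  have hdet : IsUnit S.det := (isUnit_iff_isUnit_det S).1 hS.isUnit
  have hdet₁ : IsUnit (S + 1).det := (isUnit_iff_isUnit_det _).1 (hS.add_posSemidef .one).isUnit
  have hinv : ‖S⁻¹‖ ≤ 1 := by
    refine l2_opNorm_inv_le_one hdet ?_
    rw [hSt, hSS, add_sub_cancel_left, ← conjTranspose_eq_transpose_of_trivial]
    exact posSemidef_conjTranspose_mul_self Q
  have hinv₁ : ‖(S + 1)⁻¹‖ ≤ 1 := by
    refine l2_opNorm_inv_le_one hdet₁ ?_
    have h : (S + 1)ᵀ * (S + 1) - 1 = Sᴴ * S + (S + S) := by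
      rw [conjTranspose_eq_transpose_of_trivial, transpose_add, transpose_one, hSt]
      noncomm_ring
    rw [h]
    exact (posSemidef_conjTranspose_mul_self S).add (hS.posSemidef.add hS.posSemidef)
  rw [one_sub_inv_eq_inv_mul_mul_inv hSS hdet hdet₁]
  calc ‖S⁻¹ * (Qᵀ * Q) * (S + 1)⁻¹‖ ≤ ‖S⁻¹‖ * ‖Qᵀ * Q‖ * ‖(S + 1)⁻¹‖ :=
        (l2_opNorm_mul _ _).trans (mul_le_mul_of_nonneg_right (l2_opNorm_mul _ _) (norm_nonneg _))
    _ ≤ 1 * (‖Q‖ * ‖Q‖) * 1 := by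
        rw [l2_opNorm_transpose_mul_self]
        gcongr
    _ = ‖Q‖ * ‖Q‖ := by ring

end Matrix

theorem stmt5_general (d r : ℕ)
    (U : Matrix (Fin d) (Fin r) ℝ) (Uperp : Matrix (Fin d) (Fin (d - r)) ℝ)
    (horth : (Matrix.fromCols U Uperp)ᵀ * Matrix.fromCols U Uperp = 1)
    (Q : Matrix (Fin (d - r)) (Fin r) ℝ)
    (S : Matrix (Fin r) (Fin r) ℝ) (hS : S.PosDef) (hSsq : S * S = 1 + Qᵀ * Q) :
    ((U + Uperp * Q) * S⁻¹)ᵀ * ((U + Uperp * Q) * S⁻¹) = 1 ∧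
    specNorm ((U + Uperp * Q) * S⁻¹ - U) ≤ 2 * specNorm Q := by
  obtain ⟨hUU, hUUp, hUpUp⟩ := (transpose_fromCols_mul_fromCols_eq_one_iff U Uperp).1 horth
  have hSt : Sᵀ = S := (isHermitian_iff_isSymm.1 hS.isHermitian).eq
  have hdet : IsUnit S.det := (isUnit_iff_isUnit_det S).1 hS.isUnit
  set W := (U + Uperp * Q) * S⁻¹ with hW
  have hWW : Wᵀ * W = 1 :=
    transpose_mul_self_mul_inv ((transpose_mul_self_add_mul hUU hUUp hUpUp Q).trans hSsq.symm)
      hSt hdet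
  refine ⟨hWW, ?_⟩
  have hUW : Uᵀ * W = S⁻¹ := by
    rw [hW, ← Matrix.mul_assoc, transpose_mul_add_mul hUU hUUp, Matrix.one_mul]
  have hdiff : (W - U)ᵀ * (W - U) = (2 : ℝ) • (1 - S⁻¹) :=
    transpose_sub_mul_sub hWW hUU hUW (by rw [transpose_nonsing_inv, hSt])
  have hsq : ‖W - U‖ * ‖W - U‖ ≤ 2 * (‖Q‖ * ‖Q‖) := by
    rw [← l2_opNorm_transpose_mul_self, hdiff, norm_smul, Real.norm_two]
    gcongr
    exact l2_opNorm_one_sub_inv_le hS hSsq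
  rw [specNorm_eq_l2_opNorm, specNorm_eq_l2_opNorm]
  nlinarith [norm_nonneg Q, norm_nonneg (W - U)]

/-- if U has orthonormal columns, [U U_⊥] is orthogonal, Q is arbitrary and
S is the unique symmetric positive definite square root of I + QᵀQ, then
Ũ = (U + U_⊥Q)S⁻¹ has orthonormal columns and ‖Ũ − U‖₂ ≤ 2‖Q‖₂. -/
theorem stmt5 (d r : ℕ) (hr : 1 ≤ r) (hd : r < d)
    (U : Matrix (Fin d) (Fin r) ℝ) (Uperp : Matrix (Fin d) (Fin (d - r)) ℝ)
    (hU : Uᵀ * U = 1)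
    (horth : (Matrix.fromCols U Uperp)ᵀ * Matrix.fromCols U Uperp = 1)
    (Q : Matrix (Fin (d - r)) (Fin r) ℝ)
    (S : Matrix (Fin r) (Fin r) ℝ) (hS : S.PosDef) (hSsq : S * S = 1 + Qᵀ * Q) :
    ((U + Uperp * Q) * S⁻¹)ᵀ * ((U + Uperp * Q) * S⁻¹) = 1 ∧
    specNorm ((U + Uperp * Q) * S⁻¹ - U) ≤ 2 * specNorm Q :=
  stmt5_general d r U Uperp horth Q S hS hSsq
end

section
/- Let d1, d2, T ≥ 1 and 0 ≤ h < T be integers, and let M₁,…,M_T ∈ ℝ^{d1×d2}. Then ‖(1/T)·Σ_{t=h+1}^{T} mat₁(M_{t−h} ⊗ M_t)‖₂² ≤ ‖(1/T)·Σ_{t=1}^{T} M_tM_tᵀ‖₂ · sup{ (1/T)·Σ_{t=1}^{T} ⟨W, M_t⟩_F² : W ∈ ℝ^{d1×d2}, ‖W‖_F ≤ 1 }. -/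
open Matrix

/-- The mode-1 matricization mat₁(A ⊗ B) of the order-4 tensor product of two matrices:
its rows are indexed by the row index of A, its columns by triples (j1, i2, j2), with
entries A i1 j1 * B i2 j2. -/
def mat1Kron {d1 d2 e1 e2 : ℕ} (A : Matrix (Fin d1) (Fin d2) ℝ)
    (B : Matrix (Fin e1) (Fin e2) ℝ) :
    Matrix (Fin d1) (Fin d2 × Fin e1 × Fin e2) ℝ :=
  fun i1 p => A i1 p.1 * B p.2.1 p.2.2

/-- The Frobenius norm of a real matrix. -/
noncomputable def frobNorm {a b : Type*} [Fintype a] [Fintype b] (A : Matrix a b ℝ) : ℝ :=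
  Real.sqrt (∑ i, ∑ j, (A i j) ^ 2)

/-- The Frobenius inner product ⟨A, B⟩_F = tr(AᵀB) of two real matrices. -/
def frobInner {a b : Type*} [Fintype a] [Fintype b] (A B : Matrix a b ℝ) : ℝ :=
  ∑ i, ∑ j, A i j * B i j

/-! With `Λ = (1/T) ∑ₜ M_t M_tᵀ` and `S` the supremum, the bilinear form of
`P = ∑ₜ mat₁(M_{t-h} ⊗ M_t)` splits as `u ⬝ P x = ∑ₜ ∑_j (M_{t-h}ᵀ u)_j ⟨X_j, M_t⟩_F`,
where the `X_j` are the matrix slices of `x`. Cauchy–Schwarz in `(t, j)` bounds its square by the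
product of `∑ₜ ‖M_{t-h}ᵀ u‖² ≤ ∑ₜ ‖M_tᵀ u‖² = u ⬝ (∑ₜ M_t M_tᵀ) u ≤ T ‖Λ‖ ‖u‖²` and
`∑_j ∑ₜ ⟨X_j, M_t⟩_F² ≤ T S ∑_j ‖X_j‖_F² = T S ‖x‖²`; the last inequality holds because
`W ↦ (1/T) ∑ₜ ⟨W, M_t⟩_F²` is homogeneous of degree two and bounded by `S` on the unit ball. -/

open Finset WithLp

lemma norm_toLp_sq {n : Type*} [Fintype n] (x : n → ℝ) : ‖toLp 2 x‖ ^ 2 = x ⬝ᵥ x := by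
  rw [← real_inner_self_eq_norm_sq, EuclideanSpace.inner_toLp_toLp, star_trivial]

lemma dotProduct_self_nonneg {n R : Type*} [Fintype n] [Ring R] [LinearOrder R]
    [IsStrictOrderedRing R] (x : n → R) : 0 ≤ x ⬝ᵥ x :=
  Fintype.sum_nonneg fun _ => mul_self_nonneg _

section SpectralNorm

variable {m n : Type*} [Fintype m] [Fintype n] [DecidableEq n]

lemma specNorm_nonneg (A : Matrix m n ℝ) : 0 ≤ specNorm A := norm_nonneg _

lemma dotProduct_mulVec_self_le_specNorm_mul (A : Matrix n n ℝ) (u : n → ℝ) :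
    u ⬝ᵥ (A *ᵥ u) ≤ specNorm A * (u ⬝ᵥ u) := by
  set f := LinearMap.toContinuousLinearMap (toEuclideanLin A)
  have hf : f (toLp 2 u) = toLp 2 (A *ᵥ u) := rfl
  calc u ⬝ᵥ (A *ᵥ u) = inner ℝ (toLp 2 u) (f (toLp 2 u)) := by
        rw [hf, EuclideanSpace.inner_toLp_toLp, star_trivial, dotProduct_comm]
    _ ≤ ‖toLp 2 u‖ * ‖f (toLp 2 u)‖ := real_inner_le_norm _ _
    _ ≤ ‖toLp 2 u‖ * (specNorm A * ‖toLp 2 u‖) := by gcongr; exact f.le_opNorm _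
    _ = specNorm A * (u ⬝ᵥ u) := by rw [← norm_toLp_sq]; ring

lemma specNorm_sq_le_of_dotProduct_mulVec_sq_le (A : Matrix m n ℝ) {K : ℝ} (hK : 0 ≤ K)
    (h : ∀ u x, (u ⬝ᵥ (A *ᵥ x)) ^ 2 ≤ K * (u ⬝ᵥ u) * (x ⬝ᵥ x)) : specNorm A ^ 2 ≤ K := by
  suffices specNorm A ≤ √K by
    simpa [Real.sq_sqrt hK] using pow_le_pow_left₀ (specNorm_nonneg A) this 2
  refine ContinuousLinearMap.opNorm_le_bound _ (Real.sqrt_nonneg K) fun v => ?_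
  set x := ofLp v
  set y := A *ᵥ x
  have hy : y ⬝ᵥ y ≤ K * (x ⬝ᵥ x) := by
    rcases (dotProduct_self_nonneg y).eq_or_lt with h0 | hpos
    · rw [← h0]; exact mul_nonneg hK (dotProduct_self_nonneg x)
    · refine le_of_mul_le_mul_left ?_ hpos
      nlinarith [h y x]
  have hfv : LinearMap.toContinuousLinearMap (toEuclideanLin A) v = toLp 2 y := rfl
  rw [← pow_le_pow_iff_left₀ (norm_nonneg _) (by positivity) two_ne_zero, mul_pow,
    Real.sq_sqrt hK, hfv, norm_toLp_sq, ← toLp_ofLp 2 v, norm_toLp_sq]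
  exact hy

end SpectralNorm

lemma sum_dotProduct_sq_le {ι n R : Type*} [Fintype n] [CommRing R] [LinearOrder R]
    [IsStrictOrderedRing R] (s : Finset ι) (f g : ι → n → R) :
    (∑ t ∈ s, f t ⬝ᵥ g t) ^ 2 ≤ (∑ t ∈ s, f t ⬝ᵥ f t) * ∑ t ∈ s, g t ⬝ᵥ g t := by
  have := sum_mul_sq_le_sq_mul_sq (s ×ˢ univ) (fun p => f p.1 p.2) (fun p => g p.1 p.2)
  simp only [sum_product, sq] at this
  simpa only [dotProduct, sq] using this

lemma dotProduct_sum_mul_transpose_mulVec {ι m n R : Type*} [Fintype m] [Fintype n]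
    [CommSemiring R] (s : Finset ι) (M : ι → Matrix m n R) (u : m → R) :
    u ⬝ᵥ ((∑ t ∈ s, M t * (M t)ᵀ) *ᵥ u) = ∑ t ∈ s, (u ᵥ* M t) ⬝ᵥ (u ᵥ* M t) := by
  simp only [sum_mulVec, dotProduct_sum, ← mulVec_mulVec, dotProduct_mulVec, mulVec_transpose]

lemma sum_Icc_comp_sub_le {R : Type*} [AddCommMonoid R] [PartialOrder R] [IsOrderedAddMonoid R]
    {f : ℕ → R} (hf : ∀ t, 0 ≤ f t) (h T : ℕ) :
    ∑ t ∈ Icc (h + 1) T, f (t - h) ≤ ∑ t ∈ Icc 1 T, f t := by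
  rw [← sum_image (g := (· - h)) fun s hs t ht hst => by
    simp only [coe_Icc, Set.mem_Icc] at hs ht hst; omega]
  refine sum_le_sum_of_subset_of_nonneg (fun s hs => ?_) fun t _ _ => hf t
  simp only [mem_image, mem_Icc] at hs ⊢
  omega

lemma le_norm_sq_mul_sSup {E : Type*} [NormedAddCommGroup E] [NormedSpace ℝ E] {Q : E → ℝ}
    (hQ : ∀ (r : ℝ) w, Q (r • w) = r ^ 2 * Q w)
    (hbdd : BddAbove {x | ∃ w : E, ‖w‖ ≤ 1 ∧ x = Q w}) (w : E) :
    Q w ≤ ‖w‖ ^ 2 * sSup {x | ∃ w : E, ‖w‖ ≤ 1 ∧ x = Q w} := by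
  rcases eq_or_ne w 0 with rfl | hw
  · have hQ0 := hQ 0 0
    rw [zero_smul, zero_pow two_ne_zero, zero_mul] at hQ0
    simp [hQ0]
  · have hpos : 0 < ‖w‖ := norm_pos_iff.2 hw
    have hmem : Q (‖w‖⁻¹ • w) ∈ {x | ∃ w : E, ‖w‖ ≤ 1 ∧ x = Q w} :=
      ⟨_, by rw [norm_smul, norm_inv, norm_norm, inv_mul_cancel₀ hpos.ne'], rfl⟩
    have hle := le_csSup hbdd hmem
    rw [hQ] at hle
    calc Q w = ‖w‖ ^ 2 * ((‖w‖⁻¹) ^ 2 * Q w) := by field_simp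
      _ ≤ _ := by gcongr

section Frobenius

variable {a b : Type*} [Fintype a] [Fintype b]

lemma frobNorm_sq (A : Matrix a b ℝ) : frobNorm A ^ 2 = ∑ i, A i ⬝ᵥ A i := by
  rw [frobNorm, Real.sq_sqrt (by positivity)]
  simp only [dotProduct, sq]

lemma frobInner_sq_le (W B : Matrix a b ℝ) :
    frobInner W B ^ 2 ≤ frobNorm W ^ 2 * frobNorm B ^ 2 := by
  rw [frobNorm_sq, frobNorm_sq]
  exact sum_dotProduct_sq_le univ W B

lemma frobInner_smul_left (r : ℝ) (A B : Matrix a b ℝ) :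
    frobInner (r • A) B = r * frobInner A B := by
  simp only [frobInner, Matrix.smul_apply, smul_eq_mul, mul_sum, mul_assoc]

attribute [local instance] Matrix.frobeniusNormedAddCommGroup Matrix.frobeniusNormedSpace

lemma frobNorm_eq_norm (A : Matrix a b ℝ) : frobNorm A = ‖A‖ := by
  rw [frobenius_norm_def, frobNorm, Real.sqrt_eq_rpow]
  simp [Real.norm_eq_abs, sq_abs]

lemma le_frobNorm_sq_mul_sSup {Q : Matrix a b ℝ → ℝ} (hQ : ∀ (r : ℝ) W, Q (r • W) = r ^ 2 * Q W)
    (hbdd : BddAbove {x | ∃ W : Matrix a b ℝ, frobNorm W ≤ 1 ∧ x = Q W}) (W : Matrix a b ℝ) :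
    Q W ≤ frobNorm W ^ 2 * sSup {x | ∃ W : Matrix a b ℝ, frobNorm W ≤ 1 ∧ x = Q W} := by
  simp only [frobNorm_eq_norm] at hbdd ⊢
  exact le_norm_sq_mul_sSup hQ hbdd W

variable {ι : Type*} (s : Finset ι) (M : ι → Matrix a b ℝ) {c : ℝ}

lemma bddAbove_mul_sum_frobInner_sq (hc : 0 ≤ c) :
    BddAbove {x | ∃ W : Matrix a b ℝ, frobNorm W ≤ 1 ∧
      x = c * ∑ t ∈ s, frobInner W (M t) ^ 2} := by
  refine ⟨c * ∑ t ∈ s, frobNorm (M t) ^ 2, ?_⟩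
  rintro _ ⟨W, hW, rfl⟩
  refine mul_le_mul_of_nonneg_left (sum_le_sum fun t _ => ?_) hc
  calc frobInner W (M t) ^ 2 ≤ frobNorm W ^ 2 * frobNorm (M t) ^ 2 := frobInner_sq_le _ _
    _ ≤ frobNorm (M t) ^ 2 :=
        mul_le_of_le_one_left (sq_nonneg _) (pow_le_one₀ (Real.sqrt_nonneg _) hW)

lemma mul_sum_frobInner_sq_le_frobNorm_sq_mul_sSup (hc : 0 ≤ c) (W : Matrix a b ℝ) :
    c * ∑ t ∈ s, frobInner W (M t) ^ 2 ≤ frobNorm W ^ 2 *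
      sSup {x | ∃ W : Matrix a b ℝ, frobNorm W ≤ 1 ∧ x = c * ∑ t ∈ s, frobInner W (M t) ^ 2} := by
  refine le_frobNorm_sq_mul_sSup (fun r W => ?_) (bddAbove_mul_sum_frobInner_sq s M hc) W
  simp only [frobInner_smul_left, mul_pow, ← mul_sum]
  ring

end Frobenius

section Mat1Kron

variable {d1 d2 e1 e2 : ℕ}

def tensorSlice (x : Fin d2 × Fin e1 × Fin e2 → ℝ) (j : Fin d2) : Matrix (Fin e1) (Fin e2) ℝ :=
  fun i2 j2 => x (j, i2, j2)

lemma sum_frobNorm_tensorSlice_sq (x : Fin d2 × Fin e1 × Fin e2 → ℝ) :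
    ∑ j, frobNorm (tensorSlice x j) ^ 2 = x ⬝ᵥ x := by
  simp only [frobNorm_sq, dotProduct, Fintype.sum_prod_type, tensorSlice]

lemma dotProduct_mat1Kron_mulVec (A : Matrix (Fin d1) (Fin d2) ℝ)
    (B : Matrix (Fin e1) (Fin e2) ℝ) (u : Fin d1 → ℝ) (x : Fin d2 × Fin e1 × Fin e2 → ℝ) :
    u ⬝ᵥ (mat1Kron A B *ᵥ x) = (u ᵥ* A) ⬝ᵥ fun j => frobInner (tensorSlice x j) B := by
  simp only [dotProduct, mulVec, vecMul, mat1Kron, frobInner, tensorSlice,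
    Fintype.sum_prod_type, mul_sum, sum_mul]
  rw [sum_comm]
  refine sum_congr rfl fun j _ => ?_
  rw [sum_comm]
  refine sum_congr rfl fun i2 _ => ?_
  rw [sum_comm]
  exact sum_congr rfl fun j2 _ => sum_congr rfl fun i _ => by ring

end Mat1Kron

theorem specNorm_smul_sum_mat1Kron_sq_le {d1 d2 : ℕ} (M : ℕ → Matrix (Fin d1) (Fin d2) ℝ)
    (h T : ℕ) {c S : ℝ} (hc : 0 ≤ c) (hS : 0 ≤ S)
    (hMS : ∀ W, c * ∑ t ∈ Icc 1 T, frobInner W (M t) ^ 2 ≤ frobNorm W ^ 2 * S) :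
    specNorm (c • ∑ t ∈ Icc (h + 1) T, mat1Kron (M (t - h)) (M t)) ^ 2 ≤
      specNorm (c • ∑ t ∈ Icc 1 T, M t * (M t)ᵀ) * S := by
  set Λ := c • ∑ t ∈ Icc 1 T, M t * (M t)ᵀ
  refine specNorm_sq_le_of_dotProduct_mulVec_sq_le _
    (mul_nonneg (specNorm_nonneg Λ) hS) fun u x => ?_
  set a : ℕ → Fin d2 → ℝ := fun t => u ᵥ* M (t - h)
  set b : ℕ → Fin d2 → ℝ := fun t j => frobInner (tensorSlice x j) (M t)
  have hbil : u ⬝ᵥ ((c • ∑ t ∈ Icc (h + 1) T, mat1Kron (M (t - h)) (M t)) *ᵥ x) =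
      c * ∑ t ∈ Icc (h + 1) T, a t ⬝ᵥ b t := by
    simp only [smul_mulVec, dotProduct_smul, sum_mulVec, dotProduct_sum,
      dotProduct_mat1Kron_mulVec, smul_eq_mul, a, b]
  have ha : c * ∑ t ∈ Icc (h + 1) T, a t ⬝ᵥ a t ≤ specNorm Λ * (u ⬝ᵥ u) :=
    calc c * ∑ t ∈ Icc (h + 1) T, a t ⬝ᵥ a t
        ≤ c * ∑ t ∈ Icc 1 T, (u ᵥ* M t) ⬝ᵥ (u ᵥ* M t) := by
          gcongr
          exact sum_Icc_comp_sub_le (f := fun t => (u ᵥ* M t) ⬝ᵥ (u ᵥ* M t))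
            (fun t => dotProduct_self_nonneg _) h T
      _ = u ⬝ᵥ (Λ *ᵥ u) := by
          rw [smul_mulVec, dotProduct_smul, dotProduct_sum_mul_transpose_mulVec, smul_eq_mul]
      _ ≤ specNorm Λ * (u ⬝ᵥ u) := dotProduct_mulVec_self_le_specNorm_mul Λ u
  have hb : c * ∑ t ∈ Icc (h + 1) T, b t ⬝ᵥ b t ≤ S * (x ⬝ᵥ x) :=
    calc c * ∑ t ∈ Icc (h + 1) T, b t ⬝ᵥ b t
        ≤ c * ∑ t ∈ Icc 1 T, b t ⬝ᵥ b t :=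
          mul_le_mul_of_nonneg_left (sum_le_sum_of_subset_of_nonneg
            (Icc_subset_Icc_left (by omega)) fun t _ _ => dotProduct_self_nonneg _) hc
      _ = ∑ j, c * ∑ t ∈ Icc 1 T, frobInner (tensorSlice x j) (M t) ^ 2 := by
          simp only [dotProduct, ← sq, mul_sum, b]
          exact sum_comm
      _ ≤ ∑ j, frobNorm (tensorSlice x j) ^ 2 * S := sum_le_sum fun j _ => hMS _
      _ = S * (x ⬝ᵥ x) := by rw [← sum_mul, sum_frobNorm_tensorSlice_sq, mul_comm]
  calc (u ⬝ᵥ ((c • ∑ t ∈ Icc (h + 1) T, mat1Kron (M (t - h)) (M t)) *ᵥ x)) ^ 2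
      = c ^ 2 * (∑ t ∈ Icc (h + 1) T, a t ⬝ᵥ b t) ^ 2 := by rw [hbil, mul_pow]
    _ ≤ c ^ 2 * ((∑ t ∈ Icc (h + 1) T, a t ⬝ᵥ a t) * ∑ t ∈ Icc (h + 1) T, b t ⬝ᵥ b t) := by
        gcongr
        exact sum_dotProduct_sq_le _ a b
    _ = (c * ∑ t ∈ Icc (h + 1) T, a t ⬝ᵥ a t) * (c * ∑ t ∈ Icc (h + 1) T, b t ⬝ᵥ b t) := by
        ring
    _ ≤ (specNorm Λ * (u ⬝ᵥ u)) * (S * (x ⬝ᵥ x)) :=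
        mul_le_mul ha hb (mul_nonneg hc (sum_nonneg fun t _ => dotProduct_self_nonneg _))
          (mul_nonneg (specNorm_nonneg Λ) (dotProduct_self_nonneg u))
    _ = specNorm Λ * S * (u ⬝ᵥ u) * (x ⬝ᵥ x) := by ring

theorem stmt8_general (d1 d2 T h : ℕ)
    (M : ℕ → Matrix (Fin d1) (Fin d2) ℝ) :
    specNorm ((1 / (T : ℝ)) • ∑ t ∈ Finset.Icc (h + 1) T, mat1Kron (M (t - h)) (M t)) ^ 2 ≤
      specNorm ((1 / (T : ℝ)) • ∑ t ∈ Finset.Icc 1 T, M t * (M t)ᵀ) *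
        sSup { x : ℝ | ∃ W : Matrix (Fin d1) (Fin d2) ℝ, frobNorm W ≤ 1 ∧
          x = (1 / (T : ℝ)) * ∑ t ∈ Finset.Icc 1 T, (frobInner W (M t)) ^ 2 } := by
  refine specNorm_smul_sum_mat1Kron_sq_le M h T (by positivity) (Real.sSup_nonneg ?_)
    (mul_sum_frobInner_sq_le_frobNorm_sq_mul_sSup _ M (by positivity))
  rintro _ ⟨W, -, rfl⟩
  positivity

/-- Lemma on the TOPUP norm: for matrices M₁,…,M_T ∈ ℝ^{d1×d2} and a lag
0 ≤ h < T,
‖(1/T)·Σ_{t=h+1}^{T} mat₁(M_{t−h} ⊗ M_t)‖₂²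
  ≤ ‖(1/T)·Σ_{t=1}^{T} M_tM_tᵀ‖₂ · sup{ (1/T)·Σ_{t=1}^{T} ⟨W, M_t⟩_F² : ‖W‖_F ≤ 1 }. -/
theorem stmt8 (d1 d2 T h : ℕ) (hT : 1 ≤ T) (hh : h < T)
    (M : ℕ → Matrix (Fin d1) (Fin d2) ℝ) :
    specNorm ((1 / (T : ℝ)) • ∑ t ∈ Finset.Icc (h + 1) T, mat1Kron (M (t - h)) (M t)) ^ 2 ≤
      specNorm ((1 / (T : ℝ)) • ∑ t ∈ Finset.Icc 1 T, M t * (M t)ᵀ) *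
        sSup { x : ℝ | ∃ W : Matrix (Fin d1) (Fin d2) ℝ, frobNorm W ≤ 1 ∧
          x = (1 / (T : ℝ)) * ∑ t ∈ Finset.Icc 1 T, (frobInner W (M t)) ^ 2 } :=
  stmt8_general d1 d2 T h M
end

section
/- Let p ≥ 2 and 1 ≤ r ≤ m* < p be integers, let λ̂₁ ≥ λ̂₂ ≥ … ≥ λ̂_p ≥ 0 be real numbers, and let A, B, C, h > 0 satisfy λ̂₁ ≤ C, λ̂_r ≥ A, and λ̂_{r+1} ≤ B. If (B+h)/(A+h) < (A+h)/(C+h) and (B+h)/(A+h) < h/(B+h), then m = r is the unique minimizer over m ∈ {1,…,m*} of the eigen-ratio criterion ER(m) = (λ̂_{m+1} + h)/(λ̂_m + h); that is, ER(m) > ER(r) for every m ∈ {1,…,m*} with m ≠ r. -/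
/-- if the ordered nonnegative numbers λ̂₁ ≥ … ≥ λ̂_p satisfy λ̂₁ ≤ C,
λ̂_r ≥ A, λ̂_{r+1} ≤ B with A, B, C, h > 0, and (B+h)/(A+h) < (A+h)/(C+h) as well as
(B+h)/(A+h) < h/(B+h), then m = r is the unique minimizer over m ∈ {1,…,m*} of the
eigen-ratio criterion ER(m) = (λ̂_{m+1} + h)/(λ̂_m + h).
(Eigenvalues are 0-indexed: `lam ⟨k-1,_⟩` is the k-th largest, so
ER(m) = (lam ⟨m,_⟩ + h)/(lam ⟨m-1,_⟩ + h).) -/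
theorem stmt13 (p r mstar : ℕ) (hp : 2 ≤ p) (hr : 1 ≤ r) (hrm : r ≤ mstar)
    (hmp : mstar < p)
    (lam : Fin p → ℝ) (hanti : Antitone lam)
    (hnonneg : 0 ≤ lam ⟨p - 1, by omega⟩)
    (A B C h : ℝ) (hA : 0 < A) (hB : 0 < B) (hC : 0 < C) (hh : 0 < h)
    (h1 : lam ⟨0, by omega⟩ ≤ C) (h2 : A ≤ lam ⟨r - 1, by omega⟩)
    (h3 : lam ⟨r, by omega⟩ ≤ B)
    (hcond1 : (B + h) / (A + h) < (A + h) / (C + h))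
    (hcond2 : (B + h) / (A + h) < h / (B + h)) :
    ∀ m, 1 ≤ m → ∀ hm2 : m ≤ mstar, m ≠ r →
      (lam ⟨r, by omega⟩ + h) / (lam ⟨r - 1, by omega⟩ + h) <
      (lam ⟨m, by omega⟩ + h) / (lam ⟨m - 1, by omega⟩ + h) := by

  intro m hm1 hm2 hmr
  have hpos : ∀ i : Fin p, 0 ≤ lam i := fun i =>
    le_trans hnonneg (hanti (by have := i.isLt; simp only [Fin.le_def]; omega))
  have hER_r : (lam ⟨r, by omega⟩ + h) / (lam ⟨r - 1, by omega⟩ + h) ≤ (B + h) / (A + h) :=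
    div_le_div₀ (by linarith) (by linarith) (by linarith) (by linarith)
  rcases lt_or_gt_of_ne hmr with hlt | hgt
  · -- m < r
    have hm_ge : A ≤ lam ⟨m, by omega⟩ :=
      le_trans h2 (hanti (by simp only [Fin.mk_le_mk]; omega))
    have hm1_le : lam ⟨m - 1, by omega⟩ ≤ C :=
      le_trans (hanti (by simp only [Fin.mk_le_mk]; omega)) h1
    have : (A + h) / (C + h) ≤ (lam ⟨m, by omega⟩ + h) / (lam ⟨m - 1, by omega⟩ + h) :=
      div_le_div₀ (by have := hpos ⟨m, by omega⟩; linarith) (by linarith)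
        (by have := hpos ⟨m - 1, by omega⟩; linarith) (by linarith)
    linarith
  · -- m > r
    have hm1_le : lam ⟨m - 1, by omega⟩ ≤ B :=
      le_trans (hanti (by simp only [Fin.mk_le_mk]; omega)) h3
    have : h / (B + h) ≤ (lam ⟨m, by omega⟩ + h) / (lam ⟨m - 1, by omega⟩ + h) :=
      div_le_div₀ (by have := hpos ⟨m, by omega⟩; linarith)
        (by have := hpos ⟨m, by omega⟩; linarith) (by have := hpos ⟨m-1, by omega⟩; linarith)
        (by linarith)
    linarith
end
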